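/- arXiv:1909.11982 — 2 statements merged into one kernel-verified Lean document; each statement's English description precedes it below -/
import Mathlib

section
/- For any bipartite graph G with bipartition (X,Y) where |X| = r, |Y| = s and r ≤ s, the product of edge-connectivities satisfies κ'(G)·κ'(G^{bc}) ≤ ⌈r/2⌉·⌊r/2⌋. -/
open SimpleGraph Sum

noncomputable def minDeg {V : Type*} [Fintype V] (G : SimpleGraph V) : ℕ :=
  @SimpleGraph.minDegree V G _ (Classical.decRel _)

/-- Edge-connectivity: minimum size of an edge set whose deletion disconnects
the graph (0 if the graph is disconnected or cannot be disconnected). -/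
noncomputable def edgeConn {V : Type*} [Fintype V] (G : SimpleGraph V) : ℕ :=
  sInf {n | ∃ F : Finset (Sym2 V), F.card = n ∧ ↑F ⊆ G.edgeSet ∧
    ¬ (G.deleteEdges ↑F).Connected}

/-- Vertex-connectivity: minimum size of a vertex set whose removal leaves a
graph which is disconnected or has only one vertex. -/
noncomputable def vertConn {V : Type*} [Fintype V] (G : SimpleGraph V) : ℕ :=
  sInf {n | ∃ S : Finset V, S.card = n ∧
    (¬ (G.induce ((↑S : Set V)ᶜ)).Connected ∨ Nat.card (((↑S : Set V)ᶜ : Set V)) = 1)}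

/-- `G` on `X ⊕ Y` is bipartite with parts `X` and `Y`. -/
def IsBipartition {X Y : Type*} (G : SimpleGraph (X ⊕ Y)) : Prop :=
  ∀ a b, G.Adj a b → (a.isLeft ∧ b.isRight) ∨ (a.isRight ∧ b.isLeft)

/-- Bipartite complement with respect to the bipartition `(X, Y)`. -/
def bipCompl {X Y : Type*} (G : SimpleGraph (X ⊕ Y)) : SimpleGraph (X ⊕ Y) where
  Adj a b := ((a.isLeft ∧ b.isRight) ∨ (a.isRight ∧ b.isLeft)) ∧ ¬ G.Adj a b
  symm := ⟨fun a b h => ⟨h.1.symm.imp And.symm And.symm, fun h' => h.2 h'.symm⟩⟩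
  loopless := ⟨fun a h => by rcases h.1 with ⟨h1, h2⟩ | ⟨h1, h2⟩ <;> cases a <;> simp_all⟩

/-!
A vertex `y ∈ Y` has exactly `r` neighbours in `G` and `Gᵇᶜ` together, and the edge-connectivity
of a graph is at most the degree of any of its vertices (delete the edges at that vertex). Hence
`κ'(G) κ'(Gᵇᶜ) ≤ d (r - d) ≤ ⌈r/2⌉ ⌊r/2⌋`.
-/

lemma mul_le_half_add_mul_half (a b : ℕ) : a * b ≤ (a + b + 1) / 2 * ((a + b) / 2) := by
  rcases Nat.even_or_odd' (a + b) with ⟨k, hk | hk⟩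
  · rw [hk, show (2 * k + 1) / 2 = k by omega, show 2 * k / 2 = k by omega]
    nlinarith [sq_nonneg ((a : ℤ) - b)]
  · rw [hk, show (2 * k + 1 + 1) / 2 = k + 1 by omega, show (2 * k + 1) / 2 = k by omega]
    nlinarith [sq_nonneg ((a : ℤ) - b)]

section EdgeConn

variable {V : Type*} [Fintype V] (G : SimpleGraph V)

lemma edgeConn_eq_zero_of_not_connected (h : ¬G.Connected) : edgeConn G = 0 :=
  Nat.sInf_eq_zero.2 <| .inl <| show ∃ F : Finset (Sym2 V), _ from
    ⟨∅, by simp, by simp, by simpa using h⟩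

lemma edgeConn_le_degree [DecidableRel G.Adj] (v : V) : edgeConn G ≤ G.degree v := by
  classical
  by_cases hv : ∃ w, w ≠ v
  · obtain ⟨w, hw⟩ := hv
    refine Nat.sInf_le ⟨G.incidenceFinset v, G.card_incidenceFinset_eq_degree v,
      by simpa using G.incidenceSet_subset v, fun hconn => ?_⟩
    obtain ⟨p⟩ := hconn.preconnected v w
    cases p with
    | nil => exact hw rfl
    | cons h _ =>
      rw [deleteEdges_adj] at h
      exact h.2 (by simp [mem_incidenceSet, h.1])
  · push Not at hv
    have : Subsingleton V := ⟨fun a b => (hv a).trans (hv b).symm⟩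
    have : Nonempty V := ⟨v⟩
    suffices edgeConn G = 0 by omega
    refine Nat.sInf_eq_zero.2 (.inr (Set.eq_empty_of_forall_notMem ?_))
    rintro _ ⟨F, -, -, hF⟩
    exact hF .of_subsingleton

end EdgeConn

section Bipartite

variable {X Y : Type*}

lemma isBipartition_bipCompl (G : SimpleGraph (X ⊕ Y)) : IsBipartition (bipCompl G) :=
  fun _ _ h => h.1

variable [Fintype X] [Fintype Y]

lemma IsBipartition.degree_inr {G : SimpleGraph (X ⊕ Y)} [DecidableRel G.Adj]
    (hG : IsBipartition G) (y : Y) :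
    G.degree (inr y) = (Finset.univ.filter fun x => G.Adj (inr y) (inl x)).card := by
  classical
  have : G.neighborFinset (inr y) =
      (Finset.univ.filter fun x => G.Adj (inr y) (inl x)).map .inl := by
    ext (x | y')
    · simp
    · simpa using fun h => by simpa using hG _ _ h
  rw [← card_neighborFinset_eq_degree, this, Finset.card_map]

lemma degree_add_degree_bipCompl {G : SimpleGraph (X ⊕ Y)} [DecidableRel G.Adj]
    [DecidableRel (bipCompl G).Adj] (hG : IsBipartition G) (y : Y) :
    G.degree (inr y) + (bipCompl G).degree (inr y) = Fintype.card X := by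
  rw [hG.degree_inr, (isBipartition_bipCompl G).degree_inr]
  simpa [bipCompl] using Finset.card_filter_add_card_filter_not
    (s := Finset.univ) (fun x : X => G.Adj (inr y) (inl x))

end Bipartite

theorem edgeConn_prod_bound {X Y : Type*} [Fintype X] [Fintype Y] {r s : ℕ}
    (G : SimpleGraph (X ⊕ Y)) (hbip : IsBipartition G)
    (hr : Fintype.card X = r) (hs : Fintype.card Y = s) (hrs : r ≤ s) :
    edgeConn G * edgeConn (bipCompl G) ≤ ((r + 1) / 2) * (r / 2) := by
  classical
  rcases isEmpty_or_nonempty Y with hY | ⟨⟨y⟩⟩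
  · have : IsEmpty X := Fintype.card_eq_zero_iff.1 (by rw [Fintype.card_eq_zero] at hs; omega)
    have hG : ¬G.Connected := fun h => isEmptyElim h.nonempty.some
    simp [edgeConn_eq_zero_of_not_connected G hG]
  · calc edgeConn G * edgeConn (bipCompl G)
        ≤ G.degree (inr y) * (bipCompl G).degree (inr y) :=
          Nat.mul_le_mul (edgeConn_le_degree G _) (edgeConn_le_degree _ _)
      _ ≤ _ := mul_le_half_add_mul_half _ _
      _ = (r + 1) / 2 * (r / 2) := by rw [degree_add_degree_bipCompl hbip, hr]
end

section
/- For any bipartite graph G with bipartition (X,Y) where |X| = r, |Y| = s and r ≤ s, the vertex-connectivities satisfy κ(G) + κ(G^{bc}) ≤ r and κ(G)·κ(G^{bc}) ≤ ⌈r/2⌉·⌊r/2⌋. -/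
open SimpleGraph Sum

open Finset

/- Let `y ∈ Y`. Deleting the neighbourhood of `y` isolates `y`, so `κ(H) ≤ deg_H y` for every
graph `H`; and the neighbourhoods of `y` in `G` and in `G^{bc}` partition `X`, so
`deg_G y + deg_{G^{bc}} y = r`. Both bounds follow, the product one from `a (r - a) ≤ ⌈r/2⌉ ⌊r/2⌋`.
-/

lemma vertConn_le_degree {V : Type*} [Fintype V] (H : SimpleGraph V) [DecidableRel H.Adj]
    (v : V) : vertConn H ≤ H.degree v := by
  refine Nat.sInf_le ⟨H.neighborFinset v, rfl, ?_⟩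
  set T : Set V := (↑(H.neighborFinset v))ᶜ
  have hvT : v ∈ T := by simp [T]
  by_cases hT : Nat.card T = 1
  · exact Or.inr hT
  left
  intro hconn
  have : Nontrivial T := by
    rw [Nat.card_eq_one_iff_unique, not_and] at hT
    exact not_subsingleton_iff_nontrivial.mp (fun h => hT h ⟨⟨v, hvT⟩⟩)
  obtain ⟨w, hw⟩ := exists_ne (⟨v, hvT⟩ : T)
  obtain ⟨u, hu⟩ := (hconn.preconnected _ w).nonempty_neighborSet_left hw.symm
  exact u.2 (by simpa using hu)

lemma vertConn_eq_zero_of_isEmpty {V : Type*} [Fintype V] [IsEmpty V] (H : SimpleGraph V) :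
    vertConn H = 0 :=
  Nat.eq_zero_of_le_zero <| Nat.sInf_le
    ⟨∅, rfl, Or.inl fun hconn => isEmptyElim hconn.nonempty.some.1⟩

lemma degree_add_degree_bipCompl_inr {X Y : Type*} [Fintype X] [Fintype Y]
    {G : SimpleGraph (X ⊕ Y)} (hbip : IsBipartition G) [DecidableRel G.Adj]
    [DecidableRel (bipCompl G).Adj] (y : Y) :
    G.degree (inr y) + (bipCompl G).degree (inr y) = Fintype.card X := by
  have hG : G.neighborFinset (inr y) = (univ.map .inl).filter (G.Adj (inr y)) := by
    ext (x | y')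
    · simp
    · simpa using fun h : G.Adj (inr y) (inr y') => hbip _ _ h
  have hGc : (bipCompl G).neighborFinset (inr y) =
      (univ.map .inl).filter (fun w => ¬ G.Adj (inr y) w) := by
    ext (x | y') <;> rw [mem_neighborFinset] <;> simp [bipCompl]
  rw [← card_neighborFinset_eq_degree, ← card_neighborFinset_eq_degree, hG, hGc,
    card_filter_add_card_filter_not, card_map, card_univ]

lemma mul_sub_le_ceil_half_mul_floor_half {a r : ℕ} (h : a ≤ r) :
    a * (r - a) ≤ (r + 1) / 2 * (r / 2) := by
  obtain ⟨b, rfl⟩ := Nat.exists_eq_add_of_le h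
  rw [Nat.add_sub_cancel_left]
  rcases Nat.even_or_odd (a + b) with ⟨k, hk⟩ | ⟨k, hk⟩
  · rw [show (a + b + 1) / 2 = k by omega, show (a + b) / 2 = k by omega]
    nlinarith [sq_nonneg ((a : ℤ) - b)]
  · rw [show (a + b + 1) / 2 = k + 1 by omega, show (a + b) / 2 = k by omega]
    nlinarith [sq_nonneg ((a : ℤ) - b)]

theorem vertConn_sum_and_prod_bound {X Y : Type*} [Fintype X] [Fintype Y] {r s : ℕ}
    (G : SimpleGraph (X ⊕ Y)) (hbip : IsBipartition G)
    (hr : Fintype.card X = r) (hs : Fintype.card Y = s) (hrs : r ≤ s) :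
    vertConn G + vertConn (bipCompl G) ≤ r ∧
    vertConn G * vertConn (bipCompl G) ≤ ((r + 1) / 2) * (r / 2) := by
  classical
  rcases isEmpty_or_nonempty Y with _ | ⟨⟨y⟩⟩
  · have : IsEmpty X := Fintype.card_eq_zero_iff.mp (by rw [Fintype.card_eq_zero] at hs; omega)
    simp [vertConn_eq_zero_of_isEmpty]
  have hsum := degree_add_degree_bipCompl_inr hbip y
  have hG := vertConn_le_degree G (inr y)
  have hGc := vertConn_le_degree (bipCompl G) (inr y)
  refine ⟨by omega, ?_⟩
  calc vertConn G * vertConn (bipCompl G)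
      ≤ G.degree (inr y) * (r - G.degree (inr y)) := Nat.mul_le_mul hG (by omega)
    _ ≤ (r + 1) / 2 * (r / 2) := mul_sub_le_ceil_half_mul_floor_half (by omega)
end
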